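/- Assume f is curved and let τ' > 0. Fix a nonempty subset J ⊆ I and signs (ε_j)_{j∈J} ∈ {−1,+1}^J, and for each τ > 0 let u^c(τ) = (τ/2) Σ_{j∈J} ε_j ψ_j ∈ ∂C_τ(0). Then the set A(τ) = p(SSAT_τ({u^c(τ)}, (0, τ'])) − u^c(τ) does not depend on τ, where SSAT_τ is defined relative to the cube C_τ(0) of half-width τ/2 and p is the projection Σ_{i∈I} α_i ψ_i ↦ Σ_{j∈J} α_j ψ_j onto Span(ψ_j : j ∈ J). -/

import Mathlib

open MeasureTheory Filter Set
open scoped Classical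

noncomputable section

/-- The ambient space `ℝ^N` with the Euclidean structure. -/
abbrev Euc (N : ℕ) := EuclideanSpace ℝ (Fin N)

variable {N : ℕ}

/-- The cell `C((k_i))` : points whose coordinates in the basis `ψ` satisfy
`τ(k_i - 1/2) ≤ u_i ≤ τ(k_i + 1/2)`. -/
def cube (ψ : Module.Basis (Fin N) ℝ (Euc N)) (τ : ℝ) (k : Fin N → ℤ) : Set (Euc N) :=
  {u | ∀ i, τ * ((k i : ℝ) - 1/2) ≤ ψ.repr u i ∧ ψ.repr u i ≤ τ * ((k i : ℝ) + 1/2)}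

/-- The central cell `C(0)`. -/
def cube0 (ψ : Module.Basis (Fin N) ℝ (Euc N)) (τ : ℝ) : Set (Euc N) := cube ψ τ 0

/-- The set of active (saturated) coordinates `J(u)` for `u ∈ C(0)`. -/
def Jset (ψ : Module.Basis (Fin N) ℝ (Euc N)) (τ : ℝ) (u : Euc N) : Set (Fin N) :=
  {i | ψ.repr u i = τ / 2 ∨ ψ.repr u i = -(τ / 2)}

/-- `sol` is the solution map of the problems `(P)(u)` : `sol u` minimizes `f(v - u)` over
`C(0)`.  (Under the hypotheses on `f` the minimizer is unique.) -/
def IsSol (ψ : Module.Basis (Fin N) ℝ (Euc N)) (τ : ℝ) (f : Euc N → ℝ) (sol : Euc N → Euc N) : Prop :=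
  ∀ u, sol u ∈ cube0 ψ τ ∧ IsMinOn (fun v => f (v - u)) (cube0 ψ τ) (sol u)

/-- `SSAT(C, A)` : the set of data `u` whose solution `sol u` lies in `C` and with
`f_d(u - sol u) ∈ A`. -/
def SSAT (sol : Euc N → Euc N) (fd : Euc N → ℝ) (C : Set (Euc N)) (A : Set ℝ) : Set (Euc N) :=
  {u | sol u ∈ C ∧ fd (u - sol u) ∈ A}

/-- `f` is a norm. -/
structure IsNormLike (f : Euc N → ℝ) : Prop where
  add_le : ∀ x y, f (x + y) ≤ f x + f y
  smul_eq : ∀ (c : ℝ) (x), f (c • x) = |c| * f x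
  eq_zero_iff : ∀ x, f x = 0 ↔ x = 0

/-- `f` is a norm, continuously differentiable away from `0`, with strictly convex
level sets. -/
structure GoodNorm (f : Euc N → ℝ) : Prop where
  add_le : ∀ x y, f (x + y) ≤ f x + f y
  smul_eq : ∀ (c : ℝ) (x), f (c • x) = |c| * f x
  eq_zero_iff : ∀ x, f x = 0 ↔ x = 0
  smooth : ∀ x : Euc N, x ≠ 0 → ContDiffAt ℝ 1 f x
  sconv : StrictConvex ℝ {x : Euc N | f x ≤ 1}

/-- `f` is curved : the normalized-gradient map `h : {f = 1} → S^{N-1}`,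
`h(u) = ∇f(u)/‖∇f(u)‖₂`, is a bijection whose inverse is Lipschitz. -/
def Curved (f : Euc N → ℝ) : Prop :=
  ∃ (L : NNReal) (g : Euc N → Euc N),
    LipschitzOnWith L g (Metric.sphere (0 : Euc N) 1) ∧
    (∀ u : Euc N, f u = 1 → g (‖gradient f u‖⁻¹ • gradient f u) = u) ∧
    ∀ w ∈ Metric.sphere (0 : Euc N) 1, ∃ u, f u = 1 ∧ ‖gradient f u‖⁻¹ • gradient f u = w

/-- The projection `p` onto `Span(ψ_j : j ∈ J)` along the other basis vectors. -/
def pJ (ψ : Module.Basis (Fin N) ℝ (Euc N)) (J : Set (Fin N)) (x : Euc N) : Euc N :=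
  ∑ j : Fin N, if j ∈ J then ψ.repr x j • ψ j else 0

/-- The "center" `u^c` of the face of `u` : keep the saturated coordinates, zero out
the others. -/
def ucOf (ψ : Module.Basis (Fin N) ℝ (Euc N)) (τ : ℝ) (u : Euc N) : Euc N :=
  pJ ψ (Jset ψ τ u) u

/-- The equivalence class `ū` of `u` in `C(0)` : same active set. -/
def ubar (ψ : Module.Basis (Fin N) ℝ (Euc N)) (τ : ℝ) (u : Euc N) : Set (Euc N) :=
  {w ∈ cube0 ψ τ | Jset ψ τ w = Jset ψ τ u}

/-- The discrete grid `D = τ ℤ^N` (in the basis `ψ`). -/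
def Dgrid (ψ : Module.Basis (Fin N) ℝ (Euc N)) (τ : ℝ) : Set (Euc N) :=
  {x | ∃ k : Fin N → ℤ, x = ∑ i, (τ * (k i : ℝ)) • ψ i}

/-- The slice `Dom((k_j)_{j∈J})` of the grid : grid points whose `J`-coordinates are
the prescribed `τ k_j`. -/
def DomSlice (ψ : Module.Basis (Fin N) ℝ (Euc N)) (τ : ℝ) (J : Set (Fin N)) (k : Fin N → ℤ) :
    Set (Euc N) :=
  {x ∈ Dgrid ψ τ | ∀ j ∈ J, ψ.repr x j = τ * (k j : ℝ)}

/-- The grid `τ ℤ^J` inside `Span(ψ_j : j ∈ J)`. -/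
def JgridJ (ψ : Module.Basis (Fin N) ℝ (Euc N)) (τ : ℝ) (J : Set (Fin N)) : Set (Euc N) :=
  {x | ∃ k : Fin N → ℤ, x = ∑ j : Fin N, if j ∈ J then (τ * (k j : ℝ)) • ψ j else 0}

/-- `Leb_K(S)` : the Lebesgue measure (in `ℝ^{#J}`) of the set of `J`-indexed coordinate
families whose combination lies in `S`. -/
def lebJ (ψ : Module.Basis (Fin N) ℝ (Euc N)) (J : Set (Fin N)) (S : Set (Euc N)) : ENNReal :=
  volume {a : ↥J → ℝ | (∑ j : ↥J, a j • ψ (j : Fin N)) ∈ S}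

/-- The set `C_K` of centers of the faces of codimension `K`. -/
def CKset (ψ : Module.Basis (Fin N) ℝ (Euc N)) (τ : ℝ) (K : ℕ) : Set (Euc N) :=
  {x | ∃ (J : Set (Fin N)) (ε : Fin N → ℝ), J.ncard = K ∧ (∀ j ∈ J, ε j = 1 ∨ ε j = -1) ∧
    x = ∑ j : Fin N, if j ∈ J then (ε j * (τ / 2)) • ψ j else 0}

/-- The set `Cl_K` of boundary points of `C(0)` with exactly `K` active constraints. -/
def ClKset (ψ : Module.Basis (Fin N) ℝ (Euc N)) (τ : ℝ) (K : ℕ) : Set (Euc N) :=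
  {u | u ∈ frontier (cube0 ψ τ) ∧ (Jset ψ τ u).ncard = K}

/-- `k_i(u)` : the unique integer with `τ(k_i - 1/2) ≤ u_i < τ(k_i + 1/2)`. -/
def kfun (ψ : Module.Basis (Fin N) ℝ (Euc N)) (τ : ℝ) (u : Euc N) (i : Fin N) : ℤ :=
  ⌊ψ.repr u i / τ + 1 / 2⌋

/-- The grid point `τ Σ k_i(u) ψ_i` approximating `u`. -/
def gridpt (ψ : Module.Basis (Fin N) ℝ (Euc N)) (τ : ℝ) (u : Euc N) : Euc N :=
  ∑ i, (τ * (kfun ψ τ u i : ℝ)) • ψ i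

/-- `J̃(u)` : the active set of the solution of `(P)` at the grid point of `u`. -/
def Jtil (ψ : Module.Basis (Fin N) ℝ (Euc N)) (τ : ℝ) (sol : Euc N → Euc N) (u : Euc N) :
    Set (Fin N) :=
  Jset ψ τ (sol (gridpt ψ τ u))

/-!
By uniqueness of the solution (strict convexity of the level sets of `f`),
`u ∈ SSAT_τ({u^c(τ)}, A)` says exactly that `u^c(τ)` minimizes `f(· - u)` on `C_τ(0)` and
`f_d(u - u^c(τ)) ∈ A`. With `w = u - u^c(τ)`, the first condition says that `0` minimizes the
convex function `f(· - w)` on `C_τ(0) - u^c(τ) = τ • (C_1(0) - u^c(1))`, a set star-shaped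
about `0`; for a convex function this does not change when the set is rescaled, so it does not
depend on `τ`. Hence `u ↦ u - u^c(τ₁) + u^c(τ₂)` maps the `τ₁`-set onto the `τ₂`-set, and it
commutes with `p`, which fixes `u^c(τ)`.
-/

open Topology
open scoped Pointwise

section ConvexMin

variable {E : Type*} [AddCommGroup E] [Module ℝ E] {g : E → ℝ}

theorem IsMinOn.smul_of_starConvex (hg : ConvexOn ℝ univ g) {K : Set E}
    (hK : StarConvex ℝ 0 K) (hmin : IsMinOn g K 0) {c : ℝ} (hc : 0 < c) :
    IsMinOn g (c • K) 0 := by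
  rw [isMinOn_iff] at hmin ⊢
  rintro _ ⟨d, hd, rfl⟩
  rcases le_total c 1 with hc1 | hc1
  · exact hmin _ (hK.smul_mem hd hc.le hc1)
  · -- `d` is a convex combination of `c • d` and `0`
    have hcomb := hg.2 (mem_univ (c • d)) (mem_univ 0) (inv_nonneg.2 hc.le)
      (sub_nonneg.2 (inv_le_one_of_one_le₀ hc1)) (add_sub_cancel _ _)
    rw [smul_smul, inv_mul_cancel₀ hc.ne', one_smul, smul_zero, add_zero, smul_eq_mul,
      smul_eq_mul] at hcomb
    have hd0 := hmin d hd
    have hcinv : 0 < c⁻¹ := inv_pos.2 hc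
    nlinarith

theorem IsMinOn.of_smul_sub (hg : ConvexOn ℝ univ g) {K : Set E} (hK : Convex ℝ K) {c : E}
    (hc : c ∈ K) {s t : ℝ} (hs : 0 < s) (ht : 0 < t)
    (hmin : IsMinOn (fun v => g (v - s • c)) (s • K) (s • c)) :
    IsMinOn (fun v => g (v - t • c)) (t • K) (t • c) := by
  set D : Set E := {d | c + d ∈ K}
  have hD : StarConvex ℝ 0 D := by
    intro d hd a b ha hb hab
    have := hK hc hd ha hb hab
    simp only [D, mem_ofPred_eq, smul_zero, zero_add] at this ⊢
    convert this using 1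
    rw [smul_add, ← add_assoc, ← add_smul, hab, one_smul]
  have hsD : IsMinOn g (s • D) 0 := by
    rw [isMinOn_iff] at hmin ⊢
    rintro _ ⟨d, hd, rfl⟩
    simpa [smul_add] using hmin (s • (c + d)) (smul_mem_smul_set hd)
  have htD := hsD.smul_of_starConvex hg (by simpa using hD.smul s) (div_pos ht hs)
  rw [isMinOn_iff] at htD ⊢
  rintro _ ⟨k, hk, rfl⟩
  have hkD : k - c ∈ D := by simpa [D] using hk
  simpa [smul_smul, div_mul_cancel₀ t hs.ne', smul_sub] using
    htD _ (smul_mem_smul_set (smul_mem_smul_set hkD))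

end ConvexMin

namespace GoodNorm

variable {f : Euc N → ℝ} (hf : GoodNorm f)
include hf

theorem nonneg (x : Euc N) : 0 ≤ f x := by
  have h := hf.add_le x ((-1 : ℝ) • x)
  rw [hf.smul_eq, neg_one_smul, add_neg_cancel, (hf.eq_zero_iff 0).2 rfl] at h
  norm_num at h
  linarith

theorem convexOn : ConvexOn ℝ univ f :=
  ⟨convex_univ, fun x _ y _ a b ha hb _ => (hf.add_le _ _).trans_eq <| by
    rw [hf.smul_eq, hf.smul_eq, abs_of_nonneg ha, abs_of_nonneg hb, smul_eq_mul, smul_eq_mul]⟩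

theorem convexOn_sub (w : Euc N) : ConvexOn ℝ univ fun v => f (v - w) := by
  simpa [Function.comp_def, neg_add_eq_sub] using hf.convexOn.translate_right (-w)

theorem lt_one_of_mem_interior {x : Euc N} (hx : x ∈ interior {y | f y ≤ 1}) : f x < 1 := by
  have hray : ∀ᶠ t : ℝ in 𝓝 1, t • x ∈ {y | f y ≤ 1} :=
    ((continuous_id.smul continuous_const).tendsto' 1 x (one_smul ℝ x)).eventually
      (isOpen_interior.mem_nhds hx) |>.mono fun _ h => interior_subset h
  obtain ⟨t, ht1, htx⟩ := (eventually_mem_nhdsWithin.and (nhdsWithin_le_nhds hray) :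
    ∀ᶠ t in 𝓝[Ioi (1 : ℝ)] 1, t ∈ Ioi 1 ∧ t • x ∈ {y | f y ≤ 1}).exists
  rw [mem_Ioi] at ht1
  rw [mem_ofPred_eq, hf.smul_eq, abs_of_pos (by linarith)] at htx
  nlinarith [hf.nonneg x]

theorem midpoint_lt {a b : Euc N} (hab : a ≠ b) {m : ℝ} (hm : 0 < m) (ha : f a = m)
    (hb : f b = m) : f ((1 / 2 : ℝ) • a + (1 / 2 : ℝ) • b) < m := by
  have hunit : ∀ x, f x = m → f (m⁻¹ • x) ≤ 1 := fun x hx => by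
    rw [hf.smul_eq, abs_of_pos (inv_pos.2 hm), hx, inv_mul_cancel₀ hm.ne']
  have hne : m⁻¹ • a ≠ m⁻¹ • b := (smul_right_injective _ (inv_ne_zero hm.ne')).ne hab
  have hlt := hf.lt_one_of_mem_interior <| hf.sconv (hunit a ha) (hunit b hb) hne
    (by norm_num : (0 : ℝ) < 1 / 2) (by norm_num : (0 : ℝ) < 1 / 2) (by norm_num)
  rw [smul_comm _ m⁻¹ a, smul_comm _ m⁻¹ b, ← smul_add, hf.smul_eq,
    abs_of_pos (inv_pos.2 hm), inv_mul_lt_iff₀ hm, mul_one] at hlt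
  exact hlt

theorem eq_of_isMinOn {S : Set (Euc N)} (hS : Convex ℝ S) {u a b : Euc N} (ha : a ∈ S)
    (hb : b ∈ S) (hma : IsMinOn (fun v => f (v - u)) S a)
    (hmb : IsMinOn (fun v => f (v - u)) S b) : a = b := by
  by_contra hab
  have hm : f (a - u) = f (b - u) := le_antisymm (hma hb) (hmb ha)
  rcases (hf.nonneg (a - u)).eq_or_lt with h0 | h0
  · rw [← h0, eq_comm, hf.eq_zero_iff, sub_eq_zero] at hm
    rw [eq_comm, hf.eq_zero_iff, sub_eq_zero] at h0
    exact hab (h0.trans hm.symm)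
  · have hmid := hf.midpoint_lt (fun h => hab (sub_left_injective h)) h0 rfl hm.symm
    have hle : f (a - u) ≤ f ((1 / 2 : ℝ) • a + (1 / 2 : ℝ) • b - u) :=
      hma (hS ha hb (by norm_num) (by norm_num) (by norm_num))
    have hsplit : (1 / 2 : ℝ) • a + (1 / 2 : ℝ) • b - u
        = (1 / 2 : ℝ) • (a - u) + (1 / 2 : ℝ) • (b - u) := by module
    rw [hsplit] at hle
    exact hle.not_gt hmid

end GoodNorm

theorem Module.Basis.repr_sum_ite {ι R M : Type*} [Fintype ι] [Semiring R] [AddCommMonoid M]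
    [Module R M] (b : Module.Basis ι R M) (J : Set ι) (c : ι → R) (i : ι) :
    b.repr (∑ j, if j ∈ J then c j • b j else 0) i = if i ∈ J then c i else 0 := by
  have hsmul : ∀ j, (if j ∈ J then c j • b j else 0) = (if j ∈ J then c j else 0) • b j :=
    fun j => by split_ifs <;> simp
  simp_rw [hsmul, b.repr_sum_self]

section Coordinates

variable (ψ : Module.Basis (Fin N) ℝ (Euc N))

theorem mem_cube0_iff {τ : ℝ} {u : Euc N} :
    u ∈ cube0 ψ τ ↔ ∀ i, -(τ / 2) ≤ ψ.repr u i ∧ ψ.repr u i ≤ τ / 2 := by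
  simp only [cube0, cube, mem_ofPred_eq, Pi.zero_apply, Int.cast_zero, zero_sub, zero_add]
  refine forall_congr' fun i => and_congr ?_ ?_ <;> ring_nf

theorem convex_cube0 (τ : ℝ) : Convex ℝ (cube0 ψ τ) := by
  have : cube0 ψ τ = ⋂ i, ψ.coord i ⁻¹' Icc (-(τ / 2)) (τ / 2) := by
    ext u
    simp [mem_cube0_iff]
  rw [this]
  exact convex_iInter fun i => (convex_Icc _ _).linear_preimage _

theorem cube0_eq_smul {τ : ℝ} (hτ : 0 < τ) : cube0 ψ τ = τ • cube0 ψ 1 := by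
  ext u
  rw [mem_smul_set_iff_inv_smul_mem₀ hτ.ne', mem_cube0_iff, mem_cube0_iff]
  refine forall_congr' fun i => ?_
  rw [map_smul, Finsupp.smul_apply, smul_eq_mul, ← div_eq_inv_mul, le_div_iff₀ hτ,
    div_le_iff₀ hτ]
  constructor <;> rintro ⟨h1, h2⟩ <;> constructor <;> linarith

theorem pJ_add (J : Set (Fin N)) (x y : Euc N) :
    pJ ψ J (x + y) = pJ ψ J x + pJ ψ J y := by
  simp only [pJ, map_add, Finsupp.add_apply, add_smul, ← Finset.sum_add_distrib]
  refine Finset.sum_congr rfl fun j _ => ?_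
  split_ifs <;> simp

theorem pJ_sub (J : Set (Fin N)) (x y : Euc N) :
    pJ ψ J (x - y) = pJ ψ J x - pJ ψ J y :=
  (AddMonoidHom.mk' (pJ ψ J) (pJ_add ψ J)).map_sub x y

theorem pJ_sum_ite (J : Set (Fin N)) (c : Fin N → ℝ) :
    pJ ψ J (∑ j, if j ∈ J then c j • ψ j else 0) = ∑ j, if j ∈ J then c j • ψ j else 0 := by
  simp only [pJ, ψ.repr_sum_ite]
  exact Finset.sum_congr rfl fun j _ => by split_ifs <;> rfl

end Coordinates

/-- The centre `u^c(t) = (t/2) Σ_{j∈J} ε_j ψ_j` of a face of `C_t(0)`. -/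
def faceCenter (ψ : Module.Basis (Fin N) ℝ (Euc N)) (J : Set (Fin N)) (ε : Fin N → ℝ)
    (t : ℝ) : Euc N :=
  ∑ j : Fin N, if j ∈ J then (ε j * (t / 2)) • ψ j else 0

section FaceCenter

variable (ψ : Module.Basis (Fin N) ℝ (Euc N)) (J : Set (Fin N)) (ε : Fin N → ℝ)

theorem faceCenter_eq_smul (t : ℝ) : faceCenter ψ J ε t = t • faceCenter ψ J ε 1 := by
  refine ψ.ext_elem fun i => ?_
  simp only [faceCenter, map_smul, Finsupp.smul_apply, smul_eq_mul, ψ.repr_sum_ite]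
  split_ifs <;> ring

theorem faceCenter_mem_cube0 (hε : ∀ j ∈ J, ε j = 1 ∨ ε j = -1) {t : ℝ} (ht : 0 ≤ t) :
    faceCenter ψ J ε t ∈ cube0 ψ t := by
  rw [mem_cube0_iff]
  intro i
  simp only [faceCenter, ψ.repr_sum_ite]
  split_ifs with hi
  · rcases hε i hi with h | h <;> rw [h] <;> constructor <;> linarith
  · constructor <;> linarith

theorem pJ_faceCenter (t : ℝ) : pJ ψ J (faceCenter ψ J ε t) = faceCenter ψ J ε t :=
  pJ_sum_ite ψ J _

variable {ψ J ε} {f : Euc N → ℝ}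

theorem isMinOn_faceCenter_shift (hf : GoodNorm f) (hε : ∀ j ∈ J, ε j = 1 ∨ ε j = -1)
    {t₁ t₂ : ℝ} (h₁ : 0 < t₁) (h₂ : 0 < t₂) {u : Euc N}
    (hmin : IsMinOn (fun v => f (v - u)) (cube0 ψ t₁) (faceCenter ψ J ε t₁)) :
    IsMinOn (fun v => f (v - (u - faceCenter ψ J ε t₁ + faceCenter ψ J ε t₂)))
      (cube0 ψ t₂) (faceCenter ψ J ε t₂) := by
  set w := u - faceCenter ψ J ε t₁
  have key := IsMinOn.of_smul_sub (hf.convexOn_sub w) (convex_cube0 ψ 1)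
    (faceCenter_mem_cube0 ψ J ε hε zero_le_one) h₁ h₂
  rw [← faceCenter_eq_smul, ← faceCenter_eq_smul, ← cube0_eq_smul ψ h₁,
    ← cube0_eq_smul ψ h₂] at key
  convert key (by simpa [w, sub_sub_sub_cancel_right] using hmin) using 3 with v
  abel

end FaceCenter

section SSAT

variable {ψ : Module.Basis (Fin N) ℝ (Euc N)} {f : Euc N → ℝ}

theorem IsSol.eq_of_isMinOn (hf : GoodNorm f) {τ : ℝ} {s : Euc N → Euc N}
    (hs : IsSol ψ τ f s) {u x : Euc N} (hx : x ∈ cube0 ψ τ)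
    (hmin : IsMinOn (fun v => f (v - u)) (cube0 ψ τ) x) : s u = x :=
  hf.eq_of_isMinOn (convex_cube0 ψ τ) (hs u).1 hx (hs u).2 hmin

theorem shift_mem_SSAT_faceCenter (hf : GoodNorm f) {J : Set (Fin N)} {ε : Fin N → ℝ}
    (hε : ∀ j ∈ J, ε j = 1 ∨ ε j = -1) (fd : Euc N → ℝ) (A : Set ℝ)
    {sol : ℝ → Euc N → Euc N} {t₁ t₂ : ℝ} (h₁ : 0 < t₁) (h₂ : 0 < t₂)
    (hsol₁ : IsSol ψ t₁ f (sol t₁)) (hsol₂ : IsSol ψ t₂ f (sol t₂)) {u : Euc N}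
    (hu : u ∈ SSAT (sol t₁) fd {faceCenter ψ J ε t₁} A) :
    u - faceCenter ψ J ε t₁ + faceCenter ψ J ε t₂ ∈
      SSAT (sol t₂) fd {faceCenter ψ J ε t₂} A := by
  obtain ⟨hsu, hfd⟩ := hu
  rw [mem_singleton_iff] at hsu
  have hmin := isMinOn_faceCenter_shift hf hε h₁ h₂ (hsu ▸ (hsol₁ u).2)
  have hsu' := hsol₂.eq_of_isMinOn hf (faceCenter_mem_cube0 ψ J ε hε h₂.le) hmin
  refine ⟨hsu', ?_⟩
  rwa [hsu', add_sub_cancel_right, ← hsu]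

theorem image_pJ_SSAT_faceCenter_subset (hf : GoodNorm f) {J : Set (Fin N)} {ε : Fin N → ℝ}
    (hε : ∀ j ∈ J, ε j = 1 ∨ ε j = -1) (fd : Euc N → ℝ) (A : Set ℝ)
    {sol : ℝ → Euc N → Euc N} {t₁ t₂ : ℝ} (h₁ : 0 < t₁) (h₂ : 0 < t₂)
    (hsol₁ : IsSol ψ t₁ f (sol t₁)) (hsol₂ : IsSol ψ t₂ f (sol t₂)) :
    (fun x => x - faceCenter ψ J ε t₁) '' (pJ ψ J '' SSAT (sol t₁) fd {faceCenter ψ J ε t₁} A) ⊆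
      (fun x => x - faceCenter ψ J ε t₂) ''
        (pJ ψ J '' SSAT (sol t₂) fd {faceCenter ψ J ε t₂} A) := by
  rintro _ ⟨_, ⟨u, hu, rfl⟩, rfl⟩
  refine ⟨_, ⟨_, shift_mem_SSAT_faceCenter hf hε fd A h₁ h₂ hsol₁ hsol₂ hu, rfl⟩, ?_⟩
  simp only [pJ_add, pJ_sub, pJ_faceCenter]
  abel

end SSAT

theorem stmt13_general {N : ℕ} (ψ : Module.Basis (Fin N) ℝ (Euc N))
    (f : Euc N → ℝ) (hf : GoodNorm f)
    (fd : Euc N → ℝ)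
    (sol : ℝ → Euc N → Euc N) (hsol : ∀ t : ℝ, 0 < t → IsSol ψ t f (sol t))
    (τ' : ℝ)
    (J : Set (Fin N)) (ε : Fin N → ℝ)
    (hε : ∀ j ∈ J, ε j = 1 ∨ ε j = -1)
    (ucv : ℝ → Euc N)
    (hucv : ∀ t : ℝ, ucv t = ∑ j : Fin N, if j ∈ J then (ε j * (t / 2)) • ψ j else 0) :
    ∀ t₁ t₂ : ℝ, 0 < t₁ → 0 < t₂ →
      (fun x => x - ucv t₁) '' (pJ ψ J '' SSAT (sol t₁) fd {ucv t₁} (Set.Ioc 0 τ')) =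
        (fun x => x - ucv t₂) '' (pJ ψ J '' SSAT (sol t₂) fd {ucv t₂} (Set.Ioc 0 τ')) := by
  obtain rfl : ucv = faceCenter ψ J ε := funext hucv
  intro t₁ t₂ h₁ h₂
  exact (image_pJ_SSAT_faceCenter_subset hf hε fd _ h₁ h₂ (hsol t₁ h₁) (hsol t₂ h₂)).antisymm
    (image_pJ_SSAT_faceCenter_subset hf hε fd _ h₂ h₁ (hsol t₂ h₂) (hsol t₁ h₁))

/-- for a fixed face (given by `J` and signs `ε`), the set
`A(τ) = p(SSAT_τ({u^c(τ)},(0,τ'])) - u^c(τ)` does not depend on `τ`. -/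
theorem stmt13 {N : ℕ} (hN : 1 ≤ N) (ψ : Module.Basis (Fin N) ℝ (Euc N))
    (f : Euc N → ℝ) (hf : GoodNorm f) (hcurved : Curved f)
    (fd : Euc N → ℝ) (hfd : IsNormLike fd)
    (sol : ℝ → Euc N → Euc N) (hsol : ∀ t : ℝ, 0 < t → IsSol ψ t f (sol t))
    (τ' : ℝ) (hτ' : 0 < τ')
    (J : Set (Fin N)) (hJ : J.Nonempty) (ε : Fin N → ℝ)
    (hε : ∀ j ∈ J, ε j = 1 ∨ ε j = -1)
    (ucv : ℝ → Euc N)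
    (hucv : ∀ t : ℝ, ucv t = ∑ j : Fin N, if j ∈ J then (ε j * (t / 2)) • ψ j else 0) :
    ∀ t₁ t₂ : ℝ, 0 < t₁ → 0 < t₂ →
      (fun x => x - ucv t₁) '' (pJ ψ J '' SSAT (sol t₁) fd {ucv t₁} (Set.Ioc 0 τ')) =
        (fun x => x - ucv t₂) '' (pJ ψ J '' SSAT (sol t₂) fd {ucv t₂} (Set.Ioc 0 τ')) :=
  stmt13_general ψ f hf fd sol hsol τ' J ε hε ucv hucv
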